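/- Fix n ≥ 1 and b ∈ {0,1}^n. Consider the CRN with species x_1^T, x_1^F, …, x_n^T, x_n^F, y^F, y_1^T, …, y_n^T and the (2,0) rules x_i^T + y^F → ∅ and x_i^F + y_i^T → ∅ for each 1 ≤ i ≤ n. Let the initial configuration contain, for each i, m_i ≥ 1 copies of x_i^T if b_i = 1 and m_i ≥ 1 copies of x_i^F if b_i = 0 (and zero copies of the complementary input species), together with exactly one copy of y^F and exactly one copy of each y_i^T. Then if b_1 ∨ ⋯ ∨ b_n = 1, every terminal configuration reachable from this initial configuration contains zero copies of y^F and at least one copy of some y_i^T; and if b_1 ∨ ⋯ ∨ b_n = 0, every terminal configuration contains one copy of y^F and zero copies of every y_i^T. Hence this CRN computes the n-ary OR gate with true-output species {y_i^T} and false-output species y^F. -/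
import Mathlib


/-! ### Chemical Reaction Networks (CRNs) and step CRNs -/

/-- A reaction rule: an ordered pair of multisets (reactants, products). -/
structure Rule (Λ : Type) where
  reactants : Multiset Λ
  products : Multiset Λ
deriving DecidableEq

namespace Rule

/-- A `(2,0)` void rule: exactly two reactants and no products. -/
def IsVoid20 {Λ : Type} (R : Rule Λ) : Prop :=
  Multiset.card R.reactants = 2 ∧ R.products = 0

/-- A `(2,1)` catalytic rule: two reactants, one product which is one of the reactants. -/
def IsCat21 {Λ : Type} (R : Rule Λ) : Prop :=
  Multiset.card R.reactants = 2 ∧ Multiset.card R.products = 1 ∧ R.products ≤ R.reactants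

/-- A void rule: the products form a strict submultiset of the reactants. -/
def IsVoid {Λ : Type} (R : Rule Λ) : Prop := R.products < R.reactants

end Rule

/-- A single rule application: some rule of `Γ` is applicable to `C` and transforms it to `C'`. -/
def RStep {Λ : Type} [DecidableEq Λ] (Γ : Finset (Rule Λ)) (C C' : Multiset Λ) : Prop :=
  ∃ R ∈ Γ, R.reactants ≤ C ∧ C' = C - R.reactants + R.products

/-- Reachability: the reflexive-transitive closure of single rule application. -/
def Reaches {Λ : Type} [DecidableEq Λ] (Γ : Finset (Rule Λ)) : Multiset Λ → Multiset Λ → Prop :=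
  Relation.ReflTransGen (RStep Γ)

/-- A configuration is terminal if no rule of `Γ` is applicable to it. -/
def Terminal {Λ : Type} (Γ : Finset (Rule Λ)) (C : Multiset Λ) : Prop :=
  ∀ R ∈ Γ, ¬ R.reactants ≤ C

/-- The set of terminal configurations reachable from `S` after adding `s` (one step). -/
def stepTerm {Λ : Type} [DecidableEq Λ] (Γ : Finset (Rule Λ)) (S : Set (Multiset Λ)) (s : Multiset Λ) :
    Set (Multiset Λ) :=
  {T | ∃ c ∈ S, Reaches Γ (c + s) T ∧ Terminal Γ T}

/-- `TERM_k`: terminal configurations after running the step CRN with step sequence `ss`. -/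
def termAfter {Λ : Type} [DecidableEq Λ] (Γ : Finset (Rule Λ)) (ss : List (Multiset Λ)) : Set (Multiset Λ) :=
  ss.foldl (stepTerm Γ) {0}

/-- All configurations reachable during any step, starting from terminal sets `S`. -/
def reachDuring {Λ : Type} [DecidableEq Λ] (Γ : Finset (Rule Λ)) :
    Set (Multiset Λ) → List (Multiset Λ) → Set (Multiset Λ)
  | _, [] => ∅
  | S, s :: rest =>
      {C | ∃ c ∈ S, Reaches Γ (c + s) C} ∪ reachDuring Γ (stepTerm Γ S s) rest

/-- All configurations reachable at any step of the step CRN `(Γ, ss)`. -/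
def reachAll {Λ : Type} [DecidableEq Λ] (Γ : Finset (Rule Λ)) (ss : List (Multiset Λ)) : Set (Multiset Λ) :=
  reachDuring Γ {0} ss

/-- Add the input configuration `X` to the first step of the step sequence. -/
def addToHead {Λ : Type} (X : Multiset Λ) : List (Multiset Λ) → List (Multiset Λ)
  | [] => [X]
  | s :: rest => (X + s) :: rest

/-- Species for the `n`-ary OR gate gadget. -/
inductive SpOR (n : ℕ) : Type
  | xT (i : Fin n)
  | xF (i : Fin n)
  | yF
  | yT (i : Fin n)
deriving DecidableEq

/-- The `(2,0)` rules `x_i^T + y^F → ∅` and `x_i^F + y_i^T → ∅`. -/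
def orRules (n : ℕ) : Finset (Rule (SpOR n)) :=
  (Finset.univ.image fun i : Fin n =>
      (⟨{SpOR.xT i, SpOR.yF}, 0⟩ : Rule (SpOR n))) ∪
  (Finset.univ.image fun i : Fin n =>
      (⟨{SpOR.xF i, SpOR.yT i}, 0⟩ : Rule (SpOR n)))


section OrAux

variable {n : ℕ}

lemma or_step_cases {C C' : Multiset (SpOR n)} (h : RStep (orRules n) C C') :
    (∃ i, ({SpOR.xT i, SpOR.yF} : Multiset (SpOR n)) ≤ C ∧ C = C' + {SpOR.xT i, SpOR.yF}) ∨
    (∃ i, ({SpOR.xF i, SpOR.yT i} : Multiset (SpOR n)) ≤ C ∧ C = C' + {SpOR.xF i, SpOR.yT i}) := by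
  obtain ⟨R, hR, hle, rfl⟩ := h
  simp only [orRules, Finset.mem_union, Finset.mem_image, Finset.mem_univ, true_and] at hR
  rcases hR with ⟨i, rfl⟩ | ⟨i, rfl⟩
  · exact Or.inl ⟨i, hle, by rw [add_zero, tsub_add_cancel_of_le hle]⟩
  · exact Or.inr ⟨i, hle, by rw [add_zero, tsub_add_cancel_of_le hle]⟩

lemma pair_le_iff {a c : SpOR n} (hac : a ≠ c) {C : Multiset (SpOR n)} :
    ({a, c} : Multiset (SpOR n)) ≤ C ↔ 1 ≤ C.count a ∧ 1 ≤ C.count c := by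
  rw [Multiset.le_iff_count]
  constructor
  · intro h
    refine ⟨le_trans ?_ (h a), le_trans ?_ (h c)⟩ <;>
      simp [Multiset.insert_eq_cons, Multiset.count_cons, Multiset.count_singleton, hac, hac.symm]
  · rintro ⟨h1, h2⟩ x
    rcases eq_or_ne x a with rfl | hxa
    · simpa [Multiset.insert_eq_cons, Multiset.count_cons, Multiset.count_singleton,
        hac] using h1
    · rcases eq_or_ne x c with rfl | hxc
      · simpa [Multiset.insert_eq_cons, Multiset.count_cons, Multiset.count_singleton,
          hac.symm] using h2
      · simp [Multiset.insert_eq_cons, Multiset.count_cons, Multiset.count_singleton, hxa, hxc]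

end OrAux

/-- The `(2,0)`-rule CRN above computes the `n`-ary OR gate: starting from
`m_i ≥ 1` copies of the species for each input bit plus one copy of `y^F` and of each `y_i^T`,
every reachable terminal configuration has no `y^F` and some `y_i^T` if some input bit is 1,
and one `y^F` and no `y_i^T` if all input bits are 0. -/
theorem stmt7 (n : ℕ) (hn : 1 ≤ n) (b : Fin n → Bool) (mult : Fin n → ℕ)
    (hmult : ∀ i, 1 ≤ mult i) :
    ∀ T : Multiset (SpOR n),
      Reaches (orRules n)
        ((∑ i : Fin n, mult i • ({if b i then SpOR.xT i else SpOR.xF i} : Multiset (SpOR n)))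
          + {SpOR.yF} + ∑ i : Fin n, ({SpOR.yT i} : Multiset (SpOR n))) T →
      Terminal (orRules n) T →
      ((∃ i, b i = true) →
        T.count SpOR.yF = 0 ∧ ∃ i, 1 ≤ T.count (SpOR.yT i)) ∧
      ((∀ i, b i = false) →
        T.count SpOR.yF = 1 ∧ ∀ i, T.count (SpOR.yT i) = 0) := by
  classical
  intro T hreach hterm
  have hinv :
      (∀ k, T.count (SpOR.xT k) ≤ (if b k then mult k else 0)) ∧
      ((∑ k, T.count (SpOR.xT k)) + 1
        = T.count SpOR.yF + ∑ k, (if b k then mult k else 0)) ∧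
      (∀ k, T.count (SpOR.xF k) + 1
        = T.count (SpOR.yT k) + (if b k then 0 else mult k)) := by
    clear hterm
    induction hreach with
    | refl =>
      have hxT : ∀ k, ∀ i : Fin n,
          (mult i • ({if b i then SpOR.xT i else SpOR.xF i} : Multiset (SpOR n))).count (SpOR.xT k)
            = if i = k then (if b k then mult k else 0) else 0 := by
        intro k i
        by_cases hb : b i
        · rcases eq_or_ne i k with rfl | hne
          · simp [hb, Multiset.count_nsmul, Multiset.count_singleton]
          · simp [hb, Multiset.count_nsmul, Multiset.count_singleton, hne, Ne.symm hne]
        · rcases eq_or_ne i k with rfl | hne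
          · simp [hb, Multiset.count_nsmul, Multiset.count_singleton]
          · simp [hb, Multiset.count_nsmul, Multiset.count_singleton, hne, Ne.symm hne]
      have hxF : ∀ k, ∀ i : Fin n,
          (mult i • ({if b i then SpOR.xT i else SpOR.xF i} : Multiset (SpOR n))).count (SpOR.xF k)
            = if i = k then (if b k then 0 else mult k) else 0 := by
        intro k i
        by_cases hb : b i
        · rcases eq_or_ne i k with rfl | hne
          · simp [hb, Multiset.count_nsmul, Multiset.count_singleton]
          · simp [hb, Multiset.count_nsmul, Multiset.count_singleton, hne, Ne.symm hne]
        · rcases eq_or_ne i k with rfl | hne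
          · simp [hb, Multiset.count_nsmul, Multiset.count_singleton]
          · simp [hb, Multiset.count_nsmul, Multiset.count_singleton, hne, Ne.symm hne]
      have hyF : ∀ i : Fin n,
          (mult i • ({if b i then SpOR.xT i else SpOR.xF i} : Multiset (SpOR n))).count SpOR.yF
            = 0 := by
        intro i; by_cases hb : b i <;> simp [hb, Multiset.count_nsmul, Multiset.count_singleton]
      have hyT : ∀ k, ∀ i : Fin n,
          (mult i • ({if b i then SpOR.xT i else SpOR.xF i} : Multiset (SpOR n))).count (SpOR.yT k)
            = 0 := by
        intro k i
        by_cases hb : b i <;> simp [hb, Multiset.count_nsmul, Multiset.count_singleton]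
      have cxT : ∀ k, ((∑ i : Fin n, mult i • ({if b i then SpOR.xT i else SpOR.xF i} : Multiset (SpOR n)))
          + {SpOR.yF} + ∑ i : Fin n, ({SpOR.yT i} : Multiset (SpOR n))).count (SpOR.xT k)
          = if b k then mult k else 0 := by
        intro k
        simp only [Multiset.count_add, Multiset.count_sum', Multiset.count_singleton]
        rw [Finset.sum_congr rfl fun i _ => hxT k i, Finset.sum_ite_eq' Finset.univ k]
        simp
      have cxF : ∀ k, ((∑ i : Fin n, mult i • ({if b i then SpOR.xT i else SpOR.xF i} : Multiset (SpOR n)))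
          + {SpOR.yF} + ∑ i : Fin n, ({SpOR.yT i} : Multiset (SpOR n))).count (SpOR.xF k)
          = if b k then 0 else mult k := by
        intro k
        simp only [Multiset.count_add, Multiset.count_sum', Multiset.count_singleton]
        rw [Finset.sum_congr rfl fun i _ => hxF k i, Finset.sum_ite_eq' Finset.univ k]
        simp
      have cyF : ((∑ i : Fin n, mult i • ({if b i then SpOR.xT i else SpOR.xF i} : Multiset (SpOR n)))
          + {SpOR.yF} + ∑ i : Fin n, ({SpOR.yT i} : Multiset (SpOR n))).count SpOR.yF = 1 := by
        simp only [Multiset.count_add, Multiset.count_sum', Multiset.count_singleton]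
        rw [Finset.sum_congr rfl fun i _ => hyF i]
        simp
      have cyT : ∀ k, ((∑ i : Fin n, mult i • ({if b i then SpOR.xT i else SpOR.xF i} : Multiset (SpOR n)))
          + {SpOR.yF} + ∑ i : Fin n, ({SpOR.yT i} : Multiset (SpOR n))).count (SpOR.yT k) = 1 := by
        intro k
        simp only [Multiset.count_add, Multiset.count_sum', Multiset.count_singleton]
        rw [Finset.sum_congr rfl fun i _ => hyT k i]
        simp [Finset.sum_ite_eq Finset.univ k]
      refine ⟨fun k => by rw [cxT k], ?_, fun k => by rw [cxF k, cyT k]; split <;> omega⟩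
      rw [Finset.sum_congr rfl fun k _ => cxT k, cyF]
      omega
    | @tail B C hsteps hstep ih =>
      have hcount : ∀ (p : Multiset (SpOR n)), B = C + p →
          ∀ s, B.count s = C.count s + p.count s := by
        rintro p rfl s; simp
      rcases or_step_cases hstep with ⟨i, hle, hBC⟩ | ⟨i, hle, hBC⟩
      · obtain ⟨ih1, ih2, ih3⟩ := ih
        simp only [hcount _ hBC] at ih1 ih2 ih3
        have hcT : ∀ k, ({SpOR.xT i, SpOR.yF} : Multiset (SpOR n)).count (SpOR.xT k)
            = if k = i then 1 else 0 := by
          intro k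
          simp [Multiset.insert_eq_cons, Multiset.count_cons, Multiset.count_singleton, eq_comm]
        have hcyF : ({SpOR.xT i, SpOR.yF} : Multiset (SpOR n)).count SpOR.yF = 1 := by
          simp [Multiset.insert_eq_cons, Multiset.count_cons, Multiset.count_singleton]
        have hcxF : ∀ k, ({SpOR.xT i, SpOR.yF} : Multiset (SpOR n)).count (SpOR.xF k) = 0 := by
          intro k
          simp [Multiset.insert_eq_cons, Multiset.count_cons, Multiset.count_singleton]
        have hcyT : ∀ k, ({SpOR.xT i, SpOR.yF} : Multiset (SpOR n)).count (SpOR.yT k) = 0 := by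
          intro k
          simp [Multiset.insert_eq_cons, Multiset.count_cons, Multiset.count_singleton]
        refine ⟨fun k => ?_, ?_, fun k => ?_⟩
        · have := ih1 k; omega
        · rw [Finset.sum_congr rfl fun k _ => by rw [hcT k], Finset.sum_add_distrib,
            Finset.sum_ite_eq' Finset.univ i, hcyF] at ih2
          simp only [Finset.mem_univ, if_true] at ih2
          omega
        · have := ih3 k; rw [hcxF k, hcyT k] at this; omega
      · obtain ⟨ih1, ih2, ih3⟩ := ih
        simp only [hcount _ hBC] at ih1 ih2 ih3
        have hcxT : ∀ k, ({SpOR.xF i, SpOR.yT i} : Multiset (SpOR n)).count (SpOR.xT k) = 0 := by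
          intro k
          simp [Multiset.insert_eq_cons, Multiset.count_cons, Multiset.count_singleton]
        have hcyF : ({SpOR.xF i, SpOR.yT i} : Multiset (SpOR n)).count SpOR.yF = 0 := by
          simp [Multiset.insert_eq_cons, Multiset.count_cons, Multiset.count_singleton]
        have hcxF : ∀ k, ({SpOR.xF i, SpOR.yT i} : Multiset (SpOR n)).count (SpOR.xF k)
            = if k = i then 1 else 0 := by
          intro k
          simp [Multiset.insert_eq_cons, Multiset.count_cons, Multiset.count_singleton, eq_comm]
        have hcyT : ∀ k, ({SpOR.xF i, SpOR.yT i} : Multiset (SpOR n)).count (SpOR.yT k)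
            = if k = i then 1 else 0 := by
          intro k
          simp [Multiset.insert_eq_cons, Multiset.count_cons, Multiset.count_singleton, eq_comm]
        refine ⟨fun k => ?_, ?_, fun k => ?_⟩
        · have := ih1 k; rw [hcxT k] at this; omega
        · rw [Finset.sum_congr rfl fun k _ => by rw [hcxT k], hcyF] at ih2
          simpa using ih2
        · have := ih3 k; rw [hcxF k, hcyT k] at this
          rcases eq_or_ne k i with rfl | hne
          · simp only [if_pos rfl] at this; omega
          · simp only [if_neg hne, add_zero] at this; omega
  obtain ⟨inv1, inv2, inv3⟩ := hinv
  have hmemT : ∀ i : Fin n, (⟨{SpOR.xT i, SpOR.yF}, 0⟩ : Rule (SpOR n)) ∈ orRules n := by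
    intro i; simp [orRules]
  have hmemF : ∀ i : Fin n, (⟨{SpOR.xF i, SpOR.yT i}, 0⟩ : Rule (SpOR n)) ∈ orRules n := by
    intro i; simp [orRules]
  constructor
  · rintro ⟨j, hj⟩
    have hyTj : 1 ≤ T.count (SpOR.yT j) := by
      have := inv3 j; rw [hj] at this; simp at this; omega
    refine ⟨?_, ⟨j, hyTj⟩⟩
    by_contra hyF
    have hyF1 : 1 ≤ T.count SpOR.yF := by omega
    have hsle : (∑ k, (if b k then mult k else 0)) ≤ ∑ k, T.count (SpOR.xT k) := by omega
    have hsge : (∑ k : Fin n, T.count (SpOR.xT k)) ≤ ∑ k, (if b k then mult k else 0) :=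
      Finset.sum_le_sum fun k _ => inv1 k
    have heq : ∀ k ∈ Finset.univ, T.count (SpOR.xT k) = (if b k then mult k else 0) :=
      (Finset.sum_eq_sum_iff_of_le (fun k _ => inv1 k)).mp (le_antisymm hsge hsle)
    have hxTj : 1 ≤ T.count (SpOR.xT j) := by
      have h := heq j (Finset.mem_univ j); rw [hj] at h; simp at h
      have := hmult j; omega
    exact hterm _ (hmemT j) ((pair_le_iff (by simp)).mpr ⟨hxTj, hyF1⟩)
  · intro hb
    have hxT0 : ∀ k, T.count (SpOR.xT k) = 0 := by
      intro k; have := inv1 k; rw [hb k] at this; simpa using this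
    have hsum0 : (∑ k : Fin n, T.count (SpOR.xT k)) = 0 := by simp [hxT0]
    have hM0 : (∑ k : Fin n, (if b k then mult k else 0)) = 0 := by simp [hb]
    refine ⟨by omega, fun k => ?_⟩
    by_contra hk
    have hyTk : 1 ≤ T.count (SpOR.yT k) := by omega
    have hxFk : 1 ≤ T.count (SpOR.xF k) := by
      have := inv3 k; rw [hb k] at this; simp at this; have := hmult k; omega
    exact hterm _ (hmemF k) ((pair_le_iff (by simp)).mpr ⟨hxFk, hyTk⟩)
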